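/- Let N ≥ 2, ω = exp(2πi/N), and let Z: Z_N × Z_N → ℂ. Define the orbifold Z'[b₁,b₂] = (1/N)·Σ_{a₁,a₂ ∈ Z_N} ω^(a₁b₂ - a₂b₁)·Z[a₁,a₂], and the parafermionization PF(W)[ρ₁,ρ₂] = (1/N)·Σ_{a₁,a₂} ω^((ρ₁+a₁)(ρ₂+a₂))·W[a₁,a₂]. Then PF(Z')[ρ₁,ρ₂] = ω^(ρ₁ρ₂)·PF(Z)[ρ₁,-ρ₂] for all ρ₁, ρ₂ ∈ Z_N. -/

import Mathlib

/-!
Inserting the orbifold into the parafermionization gives, for each twist `(b₁, b₂)` of `Z`,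
a double character sum whose exponent is affine in `a₁` with slope `ρ₂ + a₂ - b₂`.
Orthogonality of the primitive character `a ↦ ω ^ a.val` collapses it to the single term
`a₂ = b₂ - ρ₂`, which is `N · ω^(ρ₁ρ₂)` times the parafermionization kernel at `(ρ₁, -ρ₂)`.
-/
open Finset

namespace AddChar

variable {R 𝕜 : Type*} [CommRing R] [Fintype R] [Field 𝕜]

def orbifold (ψ : AddChar R 𝕜) (Z : R → R → 𝕜) (b₁ b₂ : R) : 𝕜 :=
  (Fintype.card R : 𝕜)⁻¹ * ∑ a₁ : R, ∑ a₂ : R, ψ (a₁ * b₂ - a₂ * b₁) * Z a₁ a₂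

def parafermionize (ψ : AddChar R 𝕜) (W : R → R → 𝕜) (ρ₁ ρ₂ : R) : 𝕜 :=
  (Fintype.card R : 𝕜)⁻¹ * ∑ a₁ : R, ∑ a₂ : R, ψ ((ρ₁ + a₁) * (ρ₂ + a₂)) * W a₁ a₂

variable {ψ : AddChar R 𝕜}

theorem sum_sum_mul_add_symplectic (hψ : ψ.IsPrimitive) (ρ₁ ρ₂ b₁ b₂ : R) :
    ∑ a₁ : R, ∑ a₂ : R, ψ ((ρ₁ + a₁) * (ρ₂ + a₂) + (b₁ * a₂ - b₂ * a₁))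
      = Fintype.card R * (ψ (ρ₁ * ρ₂) * ψ ((ρ₁ + b₁) * (-ρ₂ + b₂))) := by
  classical
  have inner (a₂ : R) : ∑ a₁ : R, ψ ((ρ₁ + a₁) * (ρ₂ + a₂) + (b₁ * a₂ - b₂ * a₁))
      = ψ (ρ₁ * (ρ₂ + a₂) + b₁ * a₂) *
          ((if ρ₂ + a₂ - b₂ = 0 then Fintype.card R else 0 : ℕ) : 𝕜) := by
    rw [← sum_mulShift _ hψ, mul_sum]
    refine sum_congr rfl fun a₁ _ ↦ ?_
    rw [← map_add_eq_mul]
    ring_nf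
  rw [sum_comm, sum_congr rfl fun a₂ _ ↦ inner a₂, sum_eq_single_of_mem (b₂ - ρ₂) (mem_univ _)]
  · rw [if_pos (by ring), mul_comm, ← map_add_eq_mul]
    ring_nf
  · intro a₂ _ ha₂
    rw [if_neg fun h ↦ ha₂ (by linear_combination h), Nat.cast_zero, mul_zero]

theorem parafermionize_orbifold (hψ : ψ.IsPrimitive) (Z : R → R → 𝕜) (ρ₁ ρ₂ : R) :
    parafermionize ψ (orbifold ψ Z) ρ₁ ρ₂ = ψ (ρ₁ * ρ₂) * parafermionize ψ Z ρ₁ (-ρ₂) := by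
  set c : 𝕜 := (Fintype.card R : 𝕜)
  calc parafermionize ψ (orbifold ψ Z) ρ₁ ρ₂
      = c⁻¹ * c⁻¹ * ∑ b₁ : R, ∑ b₂ : R,
          (∑ a₁ : R, ∑ a₂ : R, ψ ((ρ₁ + a₁) * (ρ₂ + a₂) + (b₁ * a₂ - b₂ * a₁))) * Z b₁ b₂ := by
        simp only [parafermionize, orbifold, mul_sum, sum_mul, map_add_eq_mul]
        conv_lhs => enter [2, a₁]; rw [sum_comm]; enter [2, b₁]; rw [sum_comm]
        conv_lhs => rw [sum_comm]; enter [2, b₁]; rw [sum_comm]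
        exact sum_congr rfl fun _ _ ↦ sum_congr rfl fun _ _ ↦ sum_congr rfl fun _ _ ↦
          sum_congr rfl fun _ _ ↦ by ring
    _ = c⁻¹ * c⁻¹ * c *
          (ψ (ρ₁ * ρ₂) * ∑ b₁ : R, ∑ b₂ : R, ψ ((ρ₁ + b₁) * (-ρ₂ + b₂)) * Z b₁ b₂) := by
        simp only [sum_sum_mul_add_symplectic hψ, mul_sum]
        exact sum_congr rfl fun _ _ ↦ sum_congr rfl fun _ _ ↦ by ring
    _ = ψ (ρ₁ * ρ₂) * parafermionize ψ Z ρ₁ (-ρ₂) := by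
        rw [show c⁻¹ * c⁻¹ * c = c⁻¹ by simpa only [inv_inv] using mul_self_mul_inv c⁻¹,
          parafermionize, mul_left_comm]

end AddChar

theorem stmt_5_general (N : ℕ) [NeZero N] (ω : ℂ)
    (hω : ω = Complex.exp (2 * Real.pi * Complex.I / N))
    (Z Z' : ZMod N → ZMod N → ℂ)
    (hZ' : ∀ b₁ b₂ : ZMod N, Z' b₁ b₂ = (1 / N) * ∑ a₁ : ZMod N, ∑ a₂ : ZMod N,
      ω ^ (a₁ * b₂ - a₂ * b₁).val * Z a₁ a₂)
    (PF : (ZMod N → ZMod N → ℂ) → ZMod N → ZMod N → ℂ)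
    (hPF : ∀ (W : ZMod N → ZMod N → ℂ) (ρ₁ ρ₂ : ZMod N),
      PF W ρ₁ ρ₂ = (1 / N) * ∑ a₁ : ZMod N, ∑ a₂ : ZMod N,
        ω ^ ((ρ₁ + a₁) * (ρ₂ + a₂)).val * W a₁ a₂) :
    ∀ ρ₁ ρ₂ : ZMod N, PF Z' ρ₁ ρ₂ = ω ^ (ρ₁ * ρ₂).val * PF Z ρ₁ (-ρ₂) := by
  intro ρ₁ ρ₂
  have hω_prim : IsPrimitiveRoot ω N := hω ▸ Complex.isPrimitiveRoot_exp N (NeZero.ne N)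
  set ψ := AddChar.zmodChar N hω_prim.pow_eq_one
  have hψ (a : ZMod N) : ω ^ a.val = ψ a := (AddChar.zmodChar_apply _ a).symm
  have hPF_eq : PF = ψ.parafermionize := by
    funext W ρ₁ ρ₂
    simp only [hPF, AddChar.parafermionize, hψ, ZMod.card, one_div]
  have hZ'_eq : Z' = ψ.orbifold Z := by
    funext b₁ b₂
    simp only [hZ', AddChar.orbifold, hψ, ZMod.card, one_div]
  rw [hPF_eq, hZ'_eq, AddChar.parafermionize_orbifold
    (AddChar.zmodChar_primitive_of_primitive_root N hω_prim), hψ]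

/-- parafermionizing the Z_N orbifold equals the charge-conjugated
parafermionization stacked with the Arf_N phase `ω^(ρ₁ρ₂)`. -/
theorem stmt_5 (N : ℕ) [NeZero N] (hN : 2 ≤ N) (ω : ℂ)
    (hω : ω = Complex.exp (2 * Real.pi * Complex.I / N))
    (Z Z' : ZMod N → ZMod N → ℂ)
    (hZ' : ∀ b₁ b₂ : ZMod N, Z' b₁ b₂ = (1 / N) * ∑ a₁ : ZMod N, ∑ a₂ : ZMod N,
      ω ^ (a₁ * b₂ - a₂ * b₁).val * Z a₁ a₂)
    (PF : (ZMod N → ZMod N → ℂ) → ZMod N → ZMod N → ℂ)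
    (hPF : ∀ (W : ZMod N → ZMod N → ℂ) (ρ₁ ρ₂ : ZMod N),
      PF W ρ₁ ρ₂ = (1 / N) * ∑ a₁ : ZMod N, ∑ a₂ : ZMod N,
        ω ^ ((ρ₁ + a₁) * (ρ₂ + a₂)).val * W a₁ a₂) :
    ∀ ρ₁ ρ₂ : ZMod N, PF Z' ρ₁ ρ₂ = ω ^ (ρ₁ * ρ₂).val * PF Z ρ₁ (-ρ₂) :=
  stmt_5_general N ω hω Z Z' hZ' PF hPF
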